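/- Run MPI with parameters m ≥ 0 and ℓ ≥ 1 on the deterministic MDP M(γ, ε, ℓ), starting from v_0 = 0, with all initial policies π_0 = π_{−1} = ⋯ = π_{−ℓ+2} equal to the policy taking left in every state, and with error terms ε_k(i) = −ε if i = k, ε_k(i) = ε if i = k + ℓ, and ε_k(i) = 0 otherwise. Then there exists a run of the algorithm (i.e., a choice, at every iteration, of a policy among those greedy with respect to the current value function) such that for every iteration k ≥ 1, ‖v_* − v_{π_{k,ℓ}}‖_∞ = 2(γ − γ^k) ε / ((1 − γ)(1 − γ^ℓ)); in particular the performance bound 2(γ − γ^k)ε/((1 − γ)(1 − γ^ℓ)) + (2γ^k/(1 − γ))‖v_* − v_0‖_∞ is attained with equality. -/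

import Mathlib

/-- Actions of the deterministic MDP `M(γ, ε, ℓ)`. -/
inductive Act where
  | left : Act
  | right : Act
deriving DecidableEq

/-- Deterministic transition: state `1` is absorbing; from `i ≥ 2`, `left` moves to `i - 1`
and `right` moves to `i + ℓ - 1`. -/
def nxt (ℓ : ℕ) (i : ℕ) (a : Act) : ℕ :=
  if i ≤ 1 then 1 else
    match a with
    | Act.left => i - 1
    | Act.right => i + ℓ - 1

/-- Reward: `0` in state `1` and for `left`; `r_i = −2ε(γ−γ^i)/(1−γ)` for `right` from `i ≥ 2`. -/
noncomputable def rew (γ ε : ℝ) (i : ℕ) (a : Act) : ℝ :=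
  if i ≤ 1 then 0 else
    match a with
    | Act.left => 0
    | Act.right => -2 * ε * (γ - γ ^ i) / (1 - γ)

/-- `r_i = −2ε(γ−γ^i)/(1−γ)`. -/
noncomputable def rr (γ ε : ℝ) (i : ℕ) : ℝ := -2 * ε * (γ - γ ^ i) / (1 - γ)

/-- Trajectory induced by a (possibly non-stationary) policy `σ` from state `s`. -/
def traj (ℓ : ℕ) (σ : ℕ → ℕ → Act) (s : ℕ) : ℕ → ℕ
  | 0 => s
  | (t+1) => nxt ℓ (traj ℓ σ s t) (σ t (traj ℓ σ s t))

/-- Discounted value of a (possibly non-stationary) policy `σ` from state `s`. -/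
noncomputable def val (γ ε : ℝ) (ℓ : ℕ) (σ : ℕ → ℕ → Act) (s : ℕ) : ℝ :=
  ∑' t : ℕ, γ ^ t * rew γ ε (traj ℓ σ s t) (σ t (traj ℓ σ s t))

/-- Bellman operator of a stationary policy `π`. -/
noncomputable def bellT (γ ε : ℝ) (ℓ : ℕ) (π : ℕ → Act) (v : ℕ → ℝ) : ℕ → ℝ :=
  fun i => rew γ ε i (π i) + γ * v (nxt ℓ i (π i))

/-- `π` is greedy with respect to `v`: `T_π v` is the pointwise max over the two actions. -/
noncomputable def IsGreedyD (γ ε : ℝ) (ℓ : ℕ) (π : ℕ → Act) (v : ℕ → ℝ) : Prop :=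
  ∀ i, bellT γ ε ℓ π v i =
    max (rew γ ε i Act.left + γ * v (nxt ℓ i Act.left))
        (rew γ ε i Act.right + γ * v (nxt ℓ i Act.right))

/-- Composed Bellman operator `T_{π_k} T_{π_{k-1}} ⋯ T_{π_{k-n+1}}`. -/
noncomputable def TcompD (γ ε : ℝ) (ℓ : ℕ) (π : ℤ → ℕ → Act) : ℕ → ℤ → (ℕ → ℝ) → (ℕ → ℝ)
  | 0, _ => id
  | (n+1), k => fun v => bellT γ ε ℓ (π k) (TcompD γ ε ℓ π n (k-1) v)

/-- The error terms used in the tightness construction. -/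
noncomputable def errf (ε : ℝ) (ℓ : ℕ) (k i : ℕ) : ℝ :=
  if i = k then -ε else if i = k + ℓ then ε else 0

/-- The periodic non-stationary policy `π_{k,ℓ}` looping over `π_k, π_{k-1}, …, π_{k-ℓ+1}`. -/
def periodic (ℓ : ℕ) (π : ℤ → ℕ → Act) (k : ℤ) : ℕ → ℕ → Act :=
  fun t => π (k - ((t % ℓ : ℕ) : ℤ))


/-!
Every reward is nonpositive and always moving left collects nothing, so `v_* = 0`.

The run picks `π_k = tightPolicy k`, which moves right only at state `k`. The error terms are
tuned so that in `v_{k-1}` moving right from state `k` is exactly as good as moving left, and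
from any other state no better (`TightInvariant`); this survives an MPI step because the
Bellman operators of these policies essentially shift values to the left and discount them.

From state `k`, the periodic policy `π_{k,ℓ}` moves right to `k + ℓ - 1` and walks left back to
`k` in `ℓ - 1` steps, so it collects `r_k` every `ℓ` steps forever: its value there is
`r_k / (1 - γ^ℓ)`, and no state does worse.
-/

def tightPolicy (j : ℤ) (i : ℕ) : Act :=
  if (i : ℤ) = j ∧ 1 ≤ j then Act.right else Act.left

noncomputable def tightValue (γ ε : ℝ) (m ℓ : ℕ) : ℕ → ℕ → ℝ
  | 0 => fun _ => 0
  | (k + 1) => fun i =>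
      (TcompD γ ε ℓ tightPolicy ℓ ((k + 1 : ℕ) : ℤ))^[m]
        (bellT γ ε ℓ (tightPolicy ((k + 1 : ℕ) : ℤ)) (tightValue γ ε m ℓ k)) i
        + errf ε ℓ (k + 1) i

noncomputable def gapBound (γ ε : ℝ) (j : ℕ) : ℝ := 2 * ε * ∑ r ∈ Finset.range j, γ ^ r

section Basic

variable {γ ε : ℝ} {ℓ i : ℕ}

lemma rew_left : rew γ ε i Act.left = 0 := by
  unfold rew; split <;> rfl

lemma rew_of_le_one (h : i ≤ 1) (a : Act) : rew γ ε i a = 0 := by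
  simp [rew, h]

lemma rew_right_of_two_le (h : 2 ≤ i) : rew γ ε i Act.right = rr γ ε i := by
  simp [rew, rr, show ¬ i ≤ 1 by omega]

lemma nxt_of_le_one (h : i ≤ 1) (a : Act) : nxt ℓ i a = 1 := by
  simp [nxt, h]

lemma nxt_left : nxt ℓ i Act.left = max (i - 1) 1 := by
  by_cases h : i ≤ 1
  · rw [nxt, if_pos h]; omega
  · rw [nxt, if_neg h]; omega

lemma nxt_right_of_two_le (h : 2 ≤ i) : nxt ℓ i Act.right = i + ℓ - 1 := by
  simp [nxt, show ¬ i ≤ 1 by omega]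

lemma tightPolicy_self {K : ℕ} (hK : 1 ≤ K) : tightPolicy K K = Act.right := by
  rw [tightPolicy, if_pos ⟨rfl, by exact_mod_cast hK⟩]

lemma tightPolicy_of_ne {j : ℤ} (h : (i : ℤ) ≠ j) : tightPolicy j i = Act.left := by
  rw [tightPolicy, if_neg fun h' => h h'.1]

lemma tightPolicy_of_nonpos {j : ℤ} (h : j ≤ 0) (i : ℕ) : tightPolicy j i = Act.left := by
  rw [tightPolicy, if_neg (by omega)]

end Basic

section GapBound

variable {γ ε : ℝ}

@[simp] lemma gapBound_zero : gapBound γ ε 0 = 0 := by simp [gapBound]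

lemma gapBound_succ (j : ℕ) : gapBound γ ε (j + 1) = 2 * ε + γ * gapBound γ ε j := by
  simp only [gapBound, geom_sum_succ]; ring

lemma gapBound_one : gapBound γ ε 1 = 2 * ε := by simp [gapBound]

lemma gapBound_nonneg (hγ : 0 ≤ γ) (hε : 0 ≤ ε) (j : ℕ) : 0 ≤ gapBound γ ε j := by
  unfold gapBound; positivity

lemma gapBound_mono (hγ : 0 ≤ γ) (hε : 0 ≤ ε) : Monotone (gapBound γ ε) := fun _ _ h =>
  mul_le_mul_of_nonneg_left
    (Finset.sum_le_sum_of_subset_of_nonneg (Finset.range_mono h) fun _ _ _ => pow_nonneg hγ _)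
    (by positivity)

lemma two_mul_le_gapBound (hγ : 0 ≤ γ) (hε : 0 ≤ ε) {j : ℕ} (hj : 1 ≤ j) :
    2 * ε ≤ gapBound γ ε j :=
  gapBound_one (γ := γ) ▸ gapBound_mono hγ hε hj

lemma rr_succ (hγ : γ ≠ 1) (j : ℕ) : rr γ ε (j + 1) = -(γ * gapBound γ ε j) := by
  have : 1 - γ ≠ 0 := sub_ne_zero.mpr hγ.symm
  rw [rr, gapBound, geom_sum_eq hγ]
  field_simp
  ring

end GapBound

section Greedy

variable {γ ε : ℝ} {ℓ : ℕ}

lemma rew_right_add_eq (hγ : γ ≠ 1) (v : ℕ → ℝ) {j : ℕ} (hj : 1 ≤ j) :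
    rew γ ε (j + 1) Act.right + γ * v (nxt ℓ (j + 1) Act.right)
      = rew γ ε (j + 1) Act.left + γ * v (nxt ℓ (j + 1) Act.left)
        + γ * (v (j + ℓ) - v j - gapBound γ ε j) := by
  rw [rew_right_of_two_le (by omega), nxt_right_of_two_le (by omega), rr_succ hγ, rew_left,
    nxt_left, show max (j + 1 - 1) 1 = j by omega, show j + 1 + ℓ - 1 = j + ℓ by omega]
  ring

lemma isGreedyD_tightPolicy (hγ0 : 0 ≤ γ) (hγ1 : γ ≠ 1) {v : ℕ → ℝ} {k : ℕ}
    (hle : ∀ j, 1 ≤ j → v (j + ℓ) - v j ≤ gapBound γ ε j)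
    (heq : v (k + ℓ) - v k = gapBound γ ε k) :
    IsGreedyD γ ε ℓ (tightPolicy ((k + 1 : ℕ) : ℤ)) v := by
  intro i
  unfold bellT
  obtain hi | ⟨j, hj, rfl⟩ : i ≤ 1 ∨ ∃ j, 1 ≤ j ∧ i = j + 1 := by
    rcases Nat.lt_or_ge 1 i with h | h
    · exact Or.inr ⟨i - 1, by omega, by omega⟩
    · exact Or.inl h
  · simp only [rew_of_le_one hi, nxt_of_le_one hi, max_self]
  rw [rew_right_add_eq hγ1 v hj]
  by_cases hjk : j = k
  · subst hjk
    rw [tightPolicy_self (by omega), rew_right_add_eq hγ1 v hj, heq, sub_self, mul_zero,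
      add_zero, max_self]
  · rw [tightPolicy_of_ne (by omega), max_eq_left]
    have := mul_nonpos_of_nonneg_of_nonpos hγ0 (sub_nonpos.mpr (hle j hj))
    linarith

end Greedy

section Operators

variable {γ ε : ℝ} {ℓ : ℕ}

lemma TcompD_succ_apply (π : ℤ → ℕ → Act) (n : ℕ) (k : ℤ) (u : ℕ → ℝ) :
    TcompD γ ε ℓ π (n + 1) k u = bellT γ ε ℓ (π k) (TcompD γ ε ℓ π n (k - 1) u) := rfl

lemma bellT_tightPolicy_self {K : ℕ} (hK : 2 ≤ K) (v : ℕ → ℝ) :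
    bellT γ ε ℓ (tightPolicy K) v K = rr γ ε K + γ * v (K + ℓ - 1) := by
  rw [bellT, tightPolicy_self (by omega), rew_right_of_two_le hK, nxt_right_of_two_le hK]

lemma bellT_tightPolicy_of_ne {j : ℤ} {i : ℕ} (h : i ≤ 1 ∨ (i : ℤ) ≠ j) (v : ℕ → ℝ) :
    bellT γ ε ℓ (tightPolicy j) v i = γ * v (max (i - 1) 1) := by
  rcases h with h | h
  · rw [bellT, rew_of_le_one h, nxt_of_le_one h, zero_add, show max (i - 1) 1 = 1 by omega]
  · rw [bellT, tightPolicy_of_ne h, rew_left, nxt_left, zero_add]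

lemma TcompD_tightPolicy_of_ne (n : ℕ) {j : ℤ} {i : ℕ} (h : i ≤ 1 ∨ (i : ℤ) ≠ j)
    (u : ℕ → ℝ) :
    TcompD γ ε ℓ tightPolicy (n + 1) j u i = γ ^ (n + 1) * u (max (i - (n + 1)) 1) := by
  induction n generalizing j i with
  | zero => simpa [TcompD_succ_apply, TcompD] using bellT_tightPolicy_of_ne h u
  | succ n ih =>
    have h' : max (i - 1) 1 ≤ 1 ∨ ((max (i - 1) 1 : ℕ) : ℤ) ≠ j - 1 := by
      rcases Nat.lt_or_ge 1 i with hi | hi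
      · rw [show max (i - 1) 1 = i - 1 by omega]; omega
      · omega
    rw [TcompD_succ_apply, bellT_tightPolicy_of_ne h, ih h',
      show max (max (i - 1) 1 - (n + 1)) 1 = max (i - (n + 1 + 1)) 1 by omega]
    ring

lemma TcompD_tightPolicy_period_of_ne (hℓ : 1 ≤ ℓ) {j : ℤ} {i : ℕ}
    (h : i ≤ 1 ∨ (i : ℤ) ≠ j) (u : ℕ → ℝ) :
    TcompD γ ε ℓ tightPolicy ℓ j u i = γ ^ ℓ * u (max (i - ℓ) 1) := by
  obtain ⟨n, rfl⟩ : ∃ n, ℓ = n + 1 := ⟨ℓ - 1, by omega⟩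
  exact TcompD_tightPolicy_of_ne n h u

lemma TcompD_tightPolicy_period_self (hℓ : 1 ≤ ℓ) {K : ℕ} (hK : 2 ≤ K) (u : ℕ → ℝ) :
    TcompD γ ε ℓ tightPolicy ℓ K u K = rr γ ε K + γ ^ ℓ * u K := by
  obtain ⟨n, rfl⟩ : ∃ n, ℓ = n + 1 := ⟨ℓ - 1, by omega⟩
  rw [TcompD_succ_apply, bellT_tightPolicy_self hK]
  cases n with
  | zero => simp [TcompD]
  | succ n =>
    rw [TcompD_tightPolicy_of_ne n (by omega),
      show max (K + (n + 1 + 1) - 1 - (n + 1)) 1 = K by omega]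
    ring

lemma pow_mul_sum_Ico_pow_mul {R : Type*} [CommSemiring R] (x : R) (ℓ a b : ℕ) :
    x ^ ℓ * ∑ p ∈ Finset.Ico a b, x ^ (p * ℓ) = ∑ p ∈ Finset.Ico (a + 1) (b + 1), x ^ (p * ℓ) := by
  rw [Finset.mul_sum, ← Finset.sum_Ico_add']
  refine Finset.sum_congr rfl fun p _ => ?_
  rw [add_one_mul, pow_add, mul_comm]

/- The apexes `K + q' * ℓ` are the states from which the `ℓ`-step left sweeps reach `K`, the one
state where `tightPolicy K` moves right. -/
lemma iterate_TcompD_tightPolicy_apex (hℓ : 1 ≤ ℓ) {K : ℕ} (hK : 2 ≤ K) (v : ℕ → ℝ)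
    {q q' : ℕ} (hq' : q' ≤ q + 1) :
    (TcompD γ ε ℓ tightPolicy ℓ K)^[q] (bellT γ ε ℓ (tightPolicy K) v) (K + q' * ℓ)
      = rr γ ε K * ∑ p ∈ Finset.Ico q' (q + 1), γ ^ (p * ℓ) + γ ^ (q * ℓ + 1) * v (K + ℓ - 1) := by
  induction q generalizing q' with
  | zero =>
    interval_cases q'
    · simp [bellT_tightPolicy_self hK]
    · rw [Function.iterate_zero_apply, bellT_tightPolicy_of_ne (by omega),
        show max (K + 1 * ℓ - 1) 1 = K + ℓ - 1 by omega]
      simp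
  | succ q ih =>
    rw [Function.iterate_succ_apply']
    rcases q' with _ | q'
    · have h0 := ih (q' := 0) (by omega)
      rw [zero_mul, add_zero] at h0 ⊢
      rw [TcompD_tightPolicy_period_self hℓ hK, h0,
        Finset.sum_eq_sum_Ico_succ_bot (show 0 < q + 1 + 1 by omega), ← pow_mul_sum_Ico_pow_mul]
      ring
    · have hne : ((K + (q' + 1) * ℓ : ℕ) : ℤ) ≠ K := by
        have := Nat.le_mul_of_pos_left ℓ (by omega : 0 < q' + 1); omega
      rw [TcompD_tightPolicy_period_of_ne hℓ (Or.inr hne),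
        show max (K + (q' + 1) * ℓ - ℓ) 1 = K + q' * ℓ by rw [add_one_mul]; omega,
        ih (q' := q') (by omega), ← pow_mul_sum_Ico_pow_mul]
      ring

lemma iterate_TcompD_tightPolicy_of_not_apex (hℓ : 1 ≤ ℓ) (K : ℕ) (v : ℕ → ℝ) (q : ℕ)
    {i : ℕ} (hi : ¬ (2 ≤ K ∧ ∃ q' ≤ q, i = K + q' * ℓ)) :
    (TcompD γ ε ℓ tightPolicy ℓ K)^[q] (bellT γ ε ℓ (tightPolicy K) v) i
      = γ ^ (q * ℓ + 1) * v (max (i - (q * ℓ + 1)) 1) := by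
  have hiK : ∀ {i q : ℕ}, ¬ (2 ≤ K ∧ ∃ q' ≤ q, i = K + q' * ℓ) → i ≤ 1 ∨ (i : ℤ) ≠ K := by
    intro i q hi
    by_contra! h
    exact hi ⟨by omega, 0, by omega, by omega⟩
  induction q generalizing i with
  | zero => simpa using bellT_tightPolicy_of_ne (hiK hi) v
  | succ q ih =>
    have hi' : ¬ (2 ≤ K ∧ ∃ q' ≤ q, max (i - ℓ) 1 = K + q' * ℓ) := by
      rintro ⟨hK, q', hq', h⟩
      exact hi ⟨hK, q' + 1, by omega, by rw [add_one_mul]; omega⟩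
    rw [Function.iterate_succ_apply', TcompD_tightPolicy_period_of_ne hℓ (hiK hi),
      ih hi', show max (max (i - ℓ) 1 - (q * ℓ + 1)) 1
        = max (i - ((q + 1) * ℓ + 1)) 1 by rw [add_one_mul]; omega]
    ring

end Operators

section Errors

variable {ε : ℝ} {ℓ k i : ℕ}

lemma errf_self : errf ε ℓ k k = -ε := by simp [errf]

lemma errf_add_self (hℓ : 1 ≤ ℓ) : errf ε ℓ k (k + ℓ) = ε := by
  rw [errf, if_neg (by omega), if_pos rfl]

lemma abs_errf_le (hε : 0 ≤ ε) : |errf ε ℓ k i| ≤ ε := by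
  unfold errf; split_ifs <;> simp [abs_of_nonneg hε, hε]

lemma errf_nonneg_of_ne (hε : 0 ≤ ε) (h : i ≠ k) : 0 ≤ errf ε ℓ k i := by
  unfold errf; split_ifs <;> simp_all

lemma errf_nonpos_of_ne (hε : 0 ≤ ε) (h : i ≠ k + ℓ) : errf ε ℓ k i ≤ 0 := by
  unfold errf; split_ifs <;> simp_all

end Errors

section Run

variable {γ ε : ℝ} {m ℓ : ℕ}

lemma tightValue_succ_apply (k i : ℕ) :
    tightValue γ ε m ℓ (k + 1) i
      = (TcompD γ ε ℓ tightPolicy ℓ ((k + 1 : ℕ) : ℤ))^[m]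
          (bellT γ ε ℓ (tightPolicy ((k + 1 : ℕ) : ℤ)) (tightValue γ ε m ℓ k)) i
        + errf ε ℓ (k + 1) i := rfl

lemma tightValue_succ_apex (hℓ : 1 ≤ ℓ) {k : ℕ} (hk : 1 ≤ k) {q : ℕ} (hq : q ≤ m + 1) :
    tightValue γ ε m ℓ (k + 1) (k + 1 + q * ℓ)
      = rr γ ε (k + 1) * ∑ p ∈ Finset.Ico q (m + 1), γ ^ (p * ℓ)
        + γ ^ (m * ℓ + 1) * tightValue γ ε m ℓ k (k + ℓ) + errf ε ℓ (k + 1) (k + 1 + q * ℓ) := by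
  rw [tightValue_succ_apply, iterate_TcompD_tightPolicy_apex hℓ (by omega) _ hq,
    show k + 1 + ℓ - 1 = k + ℓ by omega]

lemma tightValue_succ_of_not_apex (hℓ : 1 ≤ ℓ) (k : ℕ) {i : ℕ}
    (hi : ¬ (2 ≤ k + 1 ∧ ∃ q ≤ m, i = k + 1 + q * ℓ)) :
    tightValue γ ε m ℓ (k + 1) i
      = γ ^ (m * ℓ + 1) * tightValue γ ε m ℓ k (max (i - (m * ℓ + 1)) 1)
        + errf ε ℓ (k + 1) i := by
  rw [tightValue_succ_apply, iterate_TcompD_tightPolicy_of_not_apex hℓ _ _ _ hi]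

lemma tightValue_one (hℓ : 1 ≤ ℓ) : tightValue γ ε m ℓ 1 = errf ε ℓ 1 := by
  ext i
  rw [tightValue_succ_of_not_apex hℓ 0 fun h => absurd h.1 (by norm_num)]
  simp [tightValue]

end Run

/-- The fields `gap_le` and `gap_eq` make `tightPolicy (k + 1)` greedy with respect to `v`, with a
tie at state `k + 1`; the other fields are what carries them through one MPI iteration. -/
structure TightInvariant (γ ε : ℝ) (ℓ k : ℕ) (v : ℕ → ℝ) : Prop where
  nonpos : ∀ z < k + ℓ, v z ≤ 0
  neg_le : ∀ z, z < k ∨ z ≤ 1 → -ε ≤ v z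
  peak_le : 2 * v (k + ℓ) ≤ gapBound γ ε k
  gap_le : ∀ j, 1 ≤ j → v (j + ℓ) - v j ≤ gapBound γ ε j
  gap_eq : v (k + ℓ) - v k = gapBound γ ε k

section Invariant

variable {γ ε : ℝ} {m ℓ k : ℕ}

lemma tightInvariant_zero (hγ : 0 ≤ γ) (hε : 0 ≤ ε) : TightInvariant γ ε ℓ 0 fun _ => 0 where
  nonpos _ _ := le_rfl
  neg_le _ _ := by linarith
  peak_le := by simp
  gap_le j _ := by simpa using gapBound_nonneg hγ hε j
  gap_eq := by simp

lemma tightInvariant_one (hγ : 0 ≤ γ) (hε : 0 ≤ ε) (hℓ : 1 ≤ ℓ) :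
    TightInvariant γ ε ℓ 1 (errf ε ℓ 1) where
  nonpos z hz := errf_nonpos_of_ne hε (by omega)
  neg_le z _ := (abs_le.mp (abs_errf_le hε)).1
  peak_le := by rw [errf_add_self hℓ, gapBound_one]
  gap_le j hj := by
    have h₁ := abs_le.mp (abs_errf_le hε (ℓ := ℓ) (k := 1) (i := j + ℓ))
    have h₂ := abs_le.mp (abs_errf_le hε (ℓ := ℓ) (k := 1) (i := j))
    linarith [two_mul_le_gapBound hγ hε hj]
  gap_eq := by rw [errf_add_self hℓ, errf_self, gapBound_one]; ring

lemma TightInvariant.two_mul_pow_mul_peak_le (hγ0 : 0 ≤ γ) (hγ1 : γ ≤ 1) (hε : 0 ≤ ε)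
    {v : ℕ → ℝ} (hv : TightInvariant γ ε ℓ k v) (n : ℕ) :
    2 * (γ ^ (n + 1) * v (k + ℓ)) ≤ γ * gapBound γ ε k := by
  have hc : γ ^ (n + 1) ≤ γ := pow_le_of_le_one hγ0 hγ1 n.succ_ne_zero
  have := gapBound_nonneg hγ0 hε k
  rcases le_total (v (k + ℓ)) 0 with h | h
  · nlinarith [pow_nonneg hγ0 (n + 1)]
  · nlinarith [hv.peak_le]

lemma TightInvariant.shifted_gap_le (hγ : 0 ≤ γ) (hε : 0 ≤ ε) (hℓ : 1 ≤ ℓ) (hk : 1 ≤ k) {v : ℕ → ℝ}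
    (hv : TightInvariant γ ε ℓ k v) (n : ℕ) {j : ℕ} (hj : 1 ≤ j) :
    v (max (j + ℓ - n) 1) - v (max (j - n) 1) ≤ gapBound γ ε j := by
  rcases Nat.lt_or_ge n j with h | h
  · rw [show max (j + ℓ - n) 1 = j - n + ℓ by omega, show max (j - n) 1 = j - n by omega]
    exact (hv.gap_le _ (by omega)).trans (gapBound_mono hγ hε (by omega))
  · rw [show max (j - n) 1 = 1 by omega]
    linarith [hv.nonpos (max (j + ℓ - n) 1) (by omega), hv.neg_le 1 (by omega),
      two_mul_le_gapBound hγ hε hj]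

end Invariant

lemma eq_or_add_le_of_eq_add_mul {K q ℓ i : ℕ} (h : i = K + q * ℓ) : i = K ∨ K + ℓ ≤ i := by
  rcases q with _ | q
  · simp [h]
  · rw [h, add_one_mul]; omega

section Step

variable {γ ε : ℝ} {m ℓ k : ℕ}

lemma tightValue_succ_apex_gap (hγ : γ ≠ 1) (hℓ : 1 ≤ ℓ) (hk : 1 ≤ k) {q : ℕ} (hq : q ≤ m) :
    tightValue γ ε m ℓ (k + 1) (k + 1 + q * ℓ + ℓ) - tightValue γ ε m ℓ (k + 1) (k + 1 + q * ℓ)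
      = errf ε ℓ (k + 1) (k + 1 + q * ℓ + ℓ) - errf ε ℓ (k + 1) (k + 1 + q * ℓ)
        + γ ^ (q * ℓ) * (γ * gapBound γ ε k) := by
  rw [show k + 1 + q * ℓ + ℓ = k + 1 + (q + 1) * ℓ by ring, tightValue_succ_apex hℓ hk (by omega),
    tightValue_succ_apex hℓ hk (by omega), Finset.sum_eq_sum_Ico_succ_bot (by omega : q < m + 1),
    rr_succ hγ]
  ring

lemma tightValue_succ_gap_eq (hγ : γ ≠ 1) (hℓ : 1 ≤ ℓ) (hk : 1 ≤ k) :
    tightValue γ ε m ℓ (k + 1) (k + 1 + ℓ) - tightValue γ ε m ℓ (k + 1) (k + 1)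
      = gapBound γ ε (k + 1) := by
  have h := tightValue_succ_apex_gap (ε := ε) (m := m) hγ hℓ hk (Nat.zero_le m)
  simp only [zero_mul, add_zero, pow_zero, one_mul] at h
  rw [h, errf_add_self hℓ, errf_self, gapBound_succ]
  ring

variable (hγ0 : 0 ≤ γ) (hγ1 : γ < 1) (hε : 0 ≤ ε) (hℓ : 1 ≤ ℓ) (hk : 1 ≤ k)
  (hv : TightInvariant γ ε ℓ k (tightValue γ ε m ℓ k))
include hγ0 hγ1 hε hℓ hk hv

lemma TightInvariant.peak_le_succ :
    2 * tightValue γ ε m ℓ (k + 1) (k + 1 + ℓ) ≤ gapBound γ ε (k + 1) := by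
  have h := tightValue_succ_apex (γ := γ) (ε := ε) (m := m) hℓ hk (q := 1) (by omega)
  rw [one_mul, errf_add_self hℓ, rr_succ hγ1.ne] at h
  have hsum : 0 ≤ ∑ p ∈ Finset.Ico 1 (m + 1), γ ^ (p * ℓ) :=
    Finset.sum_nonneg fun _ _ => by positivity
  have := mul_nonneg (mul_nonneg hγ0 (gapBound_nonneg hγ0 hε k)) hsum
  rw [h, gapBound_succ]
  linarith [hv.two_mul_pow_mul_peak_le hγ0 hγ1.le hε (m * ℓ)]

lemma TightInvariant.nonpos_succ : ∀ z < k + 1 + ℓ, tightValue γ ε m ℓ (k + 1) z ≤ 0 := by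
  intro z hz
  by_cases hzk : z = k + 1
  · subst hzk
    linarith [tightValue_succ_gap_eq (ε := ε) (m := m) hγ1.ne hℓ hk,
      hv.peak_le_succ hγ0 hγ1 hε hℓ hk, gapBound_nonneg hγ0 hε (k + 1)]
  have hz' : ¬ (2 ≤ k + 1 ∧ ∃ q ≤ m, z = k + 1 + q * ℓ) := by
    rintro ⟨-, q, -, h⟩
    rcases eq_or_add_le_of_eq_add_mul h with h | h <;> omega
  rw [tightValue_succ_of_not_apex hℓ k hz']
  have := hv.nonpos (max (z - (m * ℓ + 1)) 1) (by omega)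
  have := errf_nonpos_of_ne hε (ℓ := ℓ) (k := k + 1) (i := z) (by omega)
  nlinarith [pow_nonneg hγ0 (m * ℓ + 1)]

lemma TightInvariant.neg_le_succ :
    ∀ z, z < k + 1 ∨ z ≤ 1 → -ε ≤ tightValue γ ε m ℓ (k + 1) z := by
  intro z hz
  have hz' : ¬ (2 ≤ k + 1 ∧ ∃ q ≤ m, z = k + 1 + q * ℓ) := by
    rintro ⟨-, q, -, h⟩
    omega
  rw [tightValue_succ_of_not_apex hℓ k hz']
  have := hv.neg_le (max (z - (m * ℓ + 1)) 1) (by omega)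
  have := errf_nonneg_of_ne hε (ℓ := ℓ) (k := k + 1) (i := z) (by omega)
  have := pow_le_one₀ hγ0 hγ1.le (n := m * ℓ + 1)
  nlinarith [pow_nonneg hγ0 (m * ℓ + 1)]

lemma TightInvariant.gap_le_succ : ∀ j, 1 ≤ j →
    tightValue γ ε m ℓ (k + 1) (j + ℓ) - tightValue γ ε m ℓ (k + 1) j ≤ gapBound γ ε j := by
  intro j hj
  by_cases hjk : j ≤ k
  · linarith [hv.nonpos_succ hγ0 hγ1 hε hℓ hk (j + ℓ) (by omega),
      hv.neg_le_succ hγ0 hγ1 hε hℓ hk j (Or.inl (by omega)), two_mul_le_gapBound hγ0 hε hj]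
  by_cases hapex : ∃ q ≤ m, j = k + 1 + q * ℓ
  · obtain ⟨q, hq, rfl⟩ := hapex
    rw [tightValue_succ_apex_gap hγ1.ne hℓ hk hq]
    have h₁ := abs_le.mp (abs_errf_le hε (ℓ := ℓ) (k := k + 1) (i := k + 1 + q * ℓ + ℓ))
    have h₂ := abs_le.mp (abs_errf_le hε (ℓ := ℓ) (k := k + 1) (i := k + 1 + q * ℓ))
    have h₃ : γ ^ (q * ℓ) * (γ * gapBound γ ε k) ≤ γ * gapBound γ ε k :=
      mul_le_of_le_one_left (mul_nonneg hγ0 (gapBound_nonneg hγ0 hε k)) (pow_le_one₀ hγ0 hγ1.le)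
    have h₄ := gapBound_mono hγ0 hε (show k + 1 ≤ k + 1 + q * ℓ by omega)
    rw [gapBound_succ] at h₄
    linarith
  have hjs : j ≠ k + 1 := fun h => hapex ⟨0, Nat.zero_le m, by simpa using h⟩
  have hj' : ¬ (2 ≤ k + 1 ∧ ∃ q ≤ m, j = k + 1 + q * ℓ) := fun h => hapex h.2
  have hjℓ : ¬ (2 ≤ k + 1 ∧ ∃ q ≤ m, j + ℓ = k + 1 + q * ℓ) := by
    rintro ⟨-, _ | q, hq, h⟩
    · omega
    · exact hapex ⟨q, by omega, by rw [add_one_mul] at h; omega⟩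
  rw [tightValue_succ_of_not_apex hℓ k hj', tightValue_succ_of_not_apex hℓ k hjℓ]
  have := hv.shifted_gap_le hγ0 hε hℓ hk (m * ℓ + 1) hj
  have := errf_nonneg_of_ne hε (ℓ := ℓ) hjs
  have := errf_nonpos_of_ne hε (ℓ := ℓ) (k := k + 1) (i := j + ℓ) (by omega)
  have := pow_le_one₀ hγ0 hγ1.le (n := m * ℓ + 1)
  nlinarith [pow_nonneg hγ0 (m * ℓ + 1), gapBound_nonneg hγ0 hε j]

lemma TightInvariant.succ : TightInvariant γ ε ℓ (k + 1) (tightValue γ ε m ℓ (k + 1)) where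
  nonpos := hv.nonpos_succ hγ0 hγ1 hε hℓ hk
  neg_le := hv.neg_le_succ hγ0 hγ1 hε hℓ hk
  peak_le := hv.peak_le_succ hγ0 hγ1 hε hℓ hk
  gap_le := hv.gap_le_succ hγ0 hγ1 hε hℓ hk
  gap_eq := tightValue_succ_gap_eq hγ1.ne hℓ hk

end Step

lemma tightInvariant {γ ε : ℝ} {ℓ : ℕ} (hγ0 : 0 ≤ γ) (hγ1 : γ < 1) (hε : 0 ≤ ε) (hℓ : 1 ≤ ℓ)
    (m k : ℕ) : TightInvariant γ ε ℓ k (tightValue γ ε m ℓ k) := by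
  rcases Nat.eq_zero_or_pos k with rfl | hk
  · exact tightInvariant_zero hγ0 hε
  induction k, hk using Nat.le_induction with
  | base => exact tightValue_one hℓ ▸ tightInvariant_one hγ0 hε hℓ
  | succ k hk hv => exact hv.succ hγ0 hγ1 hε hℓ hk

section Value

variable {γ ε : ℝ} {ℓ : ℕ}

lemma abs_rew_le (hγ0 : 0 ≤ γ) (hγ1 : γ < 1) (i : ℕ) (a : Act) :
    |rew γ ε i a| ≤ 2 * |ε| / (1 - γ) := by
  have hpos : 0 < 1 - γ := by linarith
  have hC : 0 ≤ 2 * |ε| / (1 - γ) := by positivity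
  unfold rew
  split_ifs
  · simpa using hC
  cases a
  · simpa using hC
  rw [abs_div, abs_of_pos hpos, abs_mul, abs_mul, abs_neg, abs_two,
    div_le_div_iff_of_pos_right hpos]
  exact mul_le_of_le_one_right (by positivity)
    (abs_sub_le_of_nonneg_of_le hγ0 hγ1.le (pow_nonneg hγ0 i) (pow_le_one₀ hγ0 hγ1.le))

lemma summable_val (hγ0 : 0 ≤ γ) (hγ1 : γ < 1) (σ : ℕ → ℕ → Act) (s : ℕ) :
    Summable fun t => γ ^ t * rew γ ε (traj ℓ σ s t) (σ t (traj ℓ σ s t)) := by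
  refine Summable.of_norm_bounded
    ((summable_geometric_of_lt_one hγ0 hγ1).mul_right (2 * |ε| / (1 - γ))) fun t => ?_
  rw [Real.norm_eq_abs, abs_mul, abs_pow, abs_of_nonneg hγ0]
  exact mul_le_mul_of_nonneg_left (abs_rew_le hγ0 hγ1 _ _) (pow_nonneg hγ0 t)

lemma traj_succ_eq (σ : ℕ → ℕ → Act) (s t : ℕ) :
    traj ℓ σ s (t + 1) = traj ℓ (fun u => σ (u + 1)) (nxt ℓ s (σ 0 s)) t := by
  induction t with
  | zero => rfl
  | succ t ih => rw [traj, ih, traj]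

lemma val_eq_rew_add (hγ0 : 0 ≤ γ) (hγ1 : γ < 1) (σ : ℕ → ℕ → Act) (s : ℕ) :
    val γ ε ℓ σ s
      = rew γ ε s (σ 0 s) + γ * val γ ε ℓ (fun t => σ (t + 1)) (nxt ℓ s (σ 0 s)) := by
  rw [val, (summable_val hγ0 hγ1 σ s).tsum_eq_zero_add, val, ← tsum_mul_left]
  simp only [traj_succ_eq, pow_succ, pow_zero, one_mul, mul_assoc, mul_comm γ]
  rfl

lemma val_eq_pow_mul_of_left (hγ0 : 0 ≤ γ) (hγ1 : γ < 1) {n i : ℕ} (hn : n < i)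
    (σ : ℕ → ℕ → Act) (hσ : ∀ t < n, σ t (i - t) = Act.left) :
    val γ ε ℓ σ i = γ ^ n * val γ ε ℓ (fun t => σ (t + n)) (i - n) := by
  induction n generalizing σ i with
  | zero => simp
  | succ n ih =>
    have h0 : σ 0 i = Act.left := hσ 0 (by omega)
    rw [val_eq_rew_add hγ0 hγ1, h0, rew_left, nxt_left,
      show max (i - 1) 1 = i - 1 by omega,
      ih (by omega) _ fun t ht => by simpa [Nat.sub_sub, add_comm] using hσ (t + 1) (by omega)]
    simp only [Nat.sub_sub, add_assoc, add_comm 1 n, pow_succ]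
    ring

lemma val_nonpos (hγ0 : 0 ≤ γ) (hγ1 : γ < 1) (hε : 0 ≤ ε) (σ : ℕ → ℕ → Act) (s : ℕ) :
    val γ ε ℓ σ s ≤ 0 := by
  refine tsum_nonpos fun t => mul_nonpos_of_nonneg_of_nonpos (pow_nonneg hγ0 t) ?_
  set i := traj ℓ σ s t
  rcases Nat.lt_or_ge 1 i with hi | hi
  · cases σ t i
    · rw [rew_left]
    · rw [rew_right_of_two_le hi, show i = i - 1 + 1 by omega, rr_succ hγ1.ne]
      exact neg_nonpos.mpr (mul_nonneg hγ0 (gapBound_nonneg hγ0 hε _))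
  · rw [rew_of_le_one hi]

lemma val_of_le_one {σ : ℕ → ℕ → Act} {s : ℕ} (hs : s ≤ 1) : val γ ε ℓ σ s = 0 := by
  have htraj : ∀ t, traj ℓ σ s t ≤ 1 := fun t => by
    induction t with
    | zero => exact hs
    | succ t ih => exact (nxt_of_le_one ih _).le
  simp [val, rew_of_le_one (htraj _)]

lemma iSup_val_eq_zero (hγ0 : 0 ≤ γ) (hγ1 : γ < 1) (hε : 0 ≤ ε) (i : ℕ) :
    ⨆ σ : ℕ → ℕ → Act, val γ ε ℓ σ i = 0 := by
  have : Nonempty Act := ⟨Act.left⟩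
  have hleft : val γ ε ℓ (fun _ _ => Act.left) i = 0 := by simp [val, rew_left]
  have hbdd : ∀ σ, val γ ε ℓ σ i ≤ 0 := fun σ => val_nonpos hγ0 hγ1 hε σ i
  exact le_antisymm (ciSup_le hbdd)
    (hleft ▸ le_ciSup (f := fun σ => val γ ε ℓ σ i) ⟨0, by rintro _ ⟨σ, rfl⟩; exact hbdd σ⟩ _)

end Value

section Periodic

variable {γ ε : ℝ} {ℓ : ℕ}

lemma periodic_add_mul (π : ℤ → ℕ → Act) (k : ℤ) (t d : ℕ) :
    periodic ℓ π k (t + d * ℓ) = periodic ℓ π k t := by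
  simp [periodic, Nat.add_mul_mod_self_right]

lemma periodic_tightPolicy_eq_left {K t i : ℕ} (ht : t ≤ i) (h : i ≠ K + t / ℓ * ℓ) :
    periodic ℓ tightPolicy K t (i - t) = Act.left := by
  refine tightPolicy_of_ne fun h' => h ?_
  have := Nat.div_add_mod' t ℓ
  omega

lemma val_periodic_tightPolicy_of_ne (hγ0 : 0 ≤ γ) (hγ1 : γ < 1) {K i : ℕ}
    (hi : ∀ d, i ≠ K + d * ℓ) : val γ ε ℓ (periodic ℓ tightPolicy K) i = 0 := by
  rcases Nat.lt_or_ge 1 i with h | h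
  · rw [val_eq_pow_mul_of_left hγ0 hγ1 (n := i - 1) (by omega) _
      fun t ht => periodic_tightPolicy_eq_left (by omega) (hi _),
      show i - (i - 1) = 1 by omega, val_of_le_one le_rfl, mul_zero]
  · exact val_of_le_one h

lemma val_periodic_tightPolicy_add_mul (hγ0 : 0 ≤ γ) (hγ1 : γ < 1) {K : ℕ} (hK : 1 ≤ K)
    (d : ℕ) :
    val γ ε ℓ (periodic ℓ tightPolicy K) (K + d * ℓ)
      = γ ^ (d * ℓ) * val γ ε ℓ (periodic ℓ tightPolicy K) K := by
  have hwalk : ∀ t < d * ℓ, periodic ℓ tightPolicy K t (K + d * ℓ - t) = Act.left :=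
    fun t ht => periodic_tightPolicy_eq_left (by omega)
      (by have := Nat.div_mul_le_self t ℓ; omega)
  rw [val_eq_pow_mul_of_left hγ0 hγ1 (by omega) _ hwalk, Nat.add_sub_cancel]
  simp only [periodic_add_mul]

lemma val_periodic_tightPolicy_self (hγ0 : 0 ≤ γ) (hγ1 : γ < 1) (hℓ : 1 ≤ ℓ) {K : ℕ}
    (hK : 1 ≤ K) : val γ ε ℓ (periodic ℓ tightPolicy K) K = rr γ ε K / (1 - γ ^ ℓ) := by
  rcases Nat.eq_or_lt_of_le hK with rfl | hK
  · simp [val_of_le_one, rr]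
  have hright : periodic ℓ tightPolicy K 0 K = Act.right := by
    simpa [periodic] using tightPolicy_self hK.le
  have hwalk : ∀ t < ℓ - 1, periodic ℓ tightPolicy K (t + 1) (K + ℓ - 1 - t) = Act.left :=
    fun t ht => by
      rw [show K + ℓ - 1 - t = K + ℓ - (t + 1) by omega]
      exact periodic_tightPolicy_eq_left (by omega) (by rw [Nat.div_eq_of_lt (by omega)]; omega)
  have hshift : (fun t => periodic ℓ tightPolicy K (t + (ℓ - 1) + 1)) = periodic ℓ tightPolicy K :=
    funext fun t => by
      simpa [add_assoc, Nat.sub_add_cancel hℓ] using periodic_add_mul tightPolicy K t 1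
  have hloop := val_eq_rew_add (ε := ε) (ℓ := ℓ) hγ0 hγ1 (periodic ℓ tightPolicy K) K
  rw [hright, rew_right_of_two_le hK, nxt_right_of_two_le hK,
    val_eq_pow_mul_of_left hγ0 hγ1 (by omega) _ hwalk, show K + ℓ - 1 - (ℓ - 1) = K by omega,
    hshift, ← mul_assoc, ← pow_succ', Nat.sub_add_cancel hℓ] at hloop
  have hγℓ : γ ^ ℓ < 1 := pow_lt_one₀ hγ0 hγ1 (by omega)
  rw [eq_div_iff (by linarith)]
  linarith

lemma val_periodic_tightPolicy_self_le (hγ0 : 0 ≤ γ) (hγ1 : γ < 1) (hε : 0 ≤ ε) {K : ℕ}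
    (hK : 1 ≤ K) (i : ℕ) :
    val γ ε ℓ (periodic ℓ tightPolicy K) K ≤ val γ ε ℓ (periodic ℓ tightPolicy K) i := by
  by_cases h : ∃ d, i = K + d * ℓ
  · obtain ⟨d, rfl⟩ := h
    rw [val_periodic_tightPolicy_add_mul hγ0 hγ1 hK]
    have := val_nonpos (ℓ := ℓ) hγ0 hγ1 hε (periodic ℓ tightPolicy K) K
    have := pow_le_one₀ hγ0 hγ1.le (n := d * ℓ)
    nlinarith [pow_nonneg hγ0 (d * ℓ)]
  · push Not at h
    rw [val_periodic_tightPolicy_of_ne hγ0 hγ1 h]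
    exact val_nonpos hγ0 hγ1 hε _ _

theorem iSup_loss_periodic_tightPolicy (hγ0 : 0 ≤ γ) (hγ1 : γ < 1) (hε : 0 ≤ ε) (hℓ : 1 ≤ ℓ)
    {K : ℕ} (hK : 1 ≤ K) :
    ⨆ i : ℕ, |(⨆ σ : ℕ → ℕ → Act, val γ ε ℓ σ i) - val γ ε ℓ (periodic ℓ tightPolicy K) i|
      = 2 * (γ - γ ^ K) * ε / ((1 - γ) * (1 - γ ^ ℓ)) := by
  set P := periodic ℓ tightPolicy K
  have habs : ∀ i, |(⨆ σ : ℕ → ℕ → Act, val γ ε ℓ σ i) - val γ ε ℓ P i| = -val γ ε ℓ P i :=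
    fun i => by
      rw [iSup_val_eq_zero hγ0 hγ1 hε, zero_sub, abs_neg,
        abs_of_nonpos (val_nonpos hγ0 hγ1 hε _ _)]
  have hle : ∀ i, -val γ ε ℓ P i ≤ -val γ ε ℓ P K :=
    fun i => neg_le_neg (val_periodic_tightPolicy_self_le hγ0 hγ1 hε hK i)
  have hγℓ : γ ^ ℓ < 1 := pow_lt_one₀ hγ0 hγ1 (by omega)
  simp_rw [habs]
  rw [le_antisymm (ciSup_le hle) (le_ciSup (f := fun i => -val γ ε ℓ P i)
      ⟨_, by rintro _ ⟨i, rfl⟩; exact hle i⟩ K),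
    val_periodic_tightPolicy_self hγ0 hγ1 hℓ hK, rr]
  have : 1 - γ ≠ 0 := by linarith
  have : 1 - γ ^ ℓ ≠ 0 := by linarith
  field_simp

end Periodic

/-- Tightness (Theorem 3 of the paper): on the MDP `M(γ, ε, ℓ)`, with `v_0 = 0`, all initial
policies equal to always-left, and the specified error terms, some run of MPI produces for
every `k ≥ 1` a periodic non-stationary policy whose loss exactly equals
`2(γ−γ^k)ε/((1−γ)(1−γ^ℓ))`, matching the performance bound (here `‖v_*−v_0‖_∞ = 0`). -/
theorem detMDP_mpi_tightness
    (γ ε : ℝ) (hγ0 : 0 < γ) (hγ1 : γ < 1) (hε : 0 < ε)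
    (m ℓ : ℕ) (hℓ : 1 ≤ ℓ) :
    ∃ (π : ℤ → ℕ → Act) (v : ℕ → ℕ → ℝ),
      (∀ j : ℤ, j ≤ 0 → π j = fun _ => Act.left) ∧
      (v 0 = fun _ => 0) ∧
      (∀ k : ℕ, 1 ≤ k →
        IsGreedyD γ ε ℓ (π (k : ℤ)) (v (k - 1)) ∧
        v k = fun i =>
          (TcompD γ ε ℓ π ℓ (k : ℤ))^[m] (bellT γ ε ℓ (π (k : ℤ)) (v (k - 1))) i
            + errf ε ℓ k i) ∧
      (∀ k : ℕ, 1 ≤ k →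
        (⨆ i : ℕ,
          |(⨆ σ : ℕ → ℕ → Act, val γ ε ℓ σ i) - val γ ε ℓ (periodic ℓ π (k : ℤ)) i|)
          = 2 * (γ - γ ^ k) * ε / ((1 - γ) * (1 - γ ^ ℓ))) := by
  refine ⟨tightPolicy, tightValue γ ε m ℓ, fun j hj => funext (tightPolicy_of_nonpos hj), rfl,
    fun k hk => ?_, fun k hk => iSup_loss_periodic_tightPolicy hγ0.le hγ1 hε.le hℓ hk⟩
  obtain ⟨n, rfl⟩ : ∃ n, k = n + 1 := ⟨k - 1, by omega⟩
  have hv := tightInvariant hγ0.le hγ1 hε.le hℓ m n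
  exact ⟨isGreedyD_tightPolicy hγ0.le hγ1.ne hv.gap_le hv.gap_eq, rfl⟩
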